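/- With X a periodic simple graph with free Γ-action and finite quotient, and B_m = A_m - (Q-I)Σ_{k=1}^{⌊m/2⌋} A_{m-2k}, one has Tr_Γ(B_m) = N_m - Tr_Γ(Q - I) if m is even, and Tr_Γ(B_m) = N_m if m is odd. -/

import Mathlib

/-- A path `(f 0, f 1, …, f m)` in a simple graph is proper if consecutive vertices are
adjacent and it has no backtracking. -/
def IsProperPath {V : Type*} (G : SimpleGraph V) (m : ℕ) (f : ℕ → V) : Prop :=
  (∀ i, i < m → G.Adj (f i) (f (i + 1))) ∧
  (∀ i, 1 ≤ i → i + 1 ≤ m → f (i - 1) ≠ f (i + 1))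

/-- A closed path `(f 0, …, f m = f 0)` has a tail if there is `k` with
`1 ≤ k ≤ ⌊m/2⌋ - 1` such that `f j = f (m - j)` for `j = 1, …, k`. -/
def HasTail {V : Type*} (m : ℕ) (f : ℕ → V) : Prop :=
  ∃ k, 1 ≤ k ∧ k ≤ m / 2 - 1 ∧ ∀ j, 1 ≤ j → j ≤ k → f j = f (m - j)

/-- `pathCount G m x y` = `A_m(x,y)`, the number of proper paths of length `m`
from `x` to `y`. -/
noncomputable def pathCount {V : Type*} (G : SimpleGraph V) (m : ℕ) (x y : V) : ℕ :=
  Nat.card {f : ℕ → V //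
    IsProperPath G m f ∧ f 0 = x ∧ f m = y ∧ ∀ i, m ≤ i → f i = y}

/-- `t_m`: the number of proper closed paths of length `m` with a tail, starting at a
vertex of the fundamental domain `F`. -/
noncomputable def tailCount {V : Type*} (G : SimpleGraph V) (F : Finset V) (m : ℕ) : ℕ :=
  ∑ x ∈ F, Nat.card {f : ℕ → V //
    IsProperPath G m f ∧ f 0 = x ∧ f m = x ∧ HasTail m f ∧ ∀ i, m ≤ i → f i = x}

section Stmt13Aux

variable {V : Type*} {Γ : Type*} [Group Γ] [MulAction Γ V] (G : SimpleGraph V)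

open scoped Classical

/-- The set of stabilized walks of length `m` starting at `x`. -/
private def WSet (m : ℕ) (x : V) : Set (ℕ → V) :=
  {f | (∀ i, i < m → G.Adj (f i) (f (i + 1))) ∧ f 0 = x ∧ ∀ i, m ≤ i → f i = f m}

private lemma wset_finite (hfin : ∀ v, (G.neighborSet v).Finite) (m : ℕ) (x : V) :
    (WSet G m x).Finite := by
  induction m with
  | zero =>
    apply Set.Finite.subset (Set.finite_singleton (fun _ => x))
    rintro f ⟨-, h0, hs⟩
    funext i
    simpa [h0] using hs i (Nat.zero_le i)
  | succ m ih =>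
    set φ : (ℕ → V) → (ℕ → V) × V :=
      fun f => (fun i => if i ≤ m then f i else f m, f (m + 1)) with hφ
    have hfin2 : (⋃ g ∈ WSet G m x, (fun v => (g, v)) '' (G.neighborSet (g m))).Finite :=
      Set.Finite.biUnion ih (fun g _ => (hfin (g m)).image _)
    have himg : φ '' WSet G (m + 1) x ⊆
        ⋃ g ∈ WSet G m x, (fun v => (g, v)) '' (G.neighborSet (g m)) := by
      rintro _ ⟨f, ⟨hadj, h0, hs⟩, rfl⟩
      have hg : (fun i => if i ≤ m then f i else f m) ∈ WSet G m x := by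
        refine ⟨fun i hi => ?_, by simpa using h0, fun i hi => ?_⟩
        · have h1 : i ≤ m := le_of_lt hi
          have h2 : i + 1 ≤ m := hi
          simp only [if_pos h1, if_pos h2]
          exact hadj i (by omega)
        · by_cases h : i ≤ m
          · have : i = m := le_antisymm h hi
            simp [this]
          · simp [h]
      refine Set.mem_biUnion hg ?_
      refine ⟨f (m + 1), ?_, ?_⟩
      · have : G.Adj (f m) (f (m + 1)) := hadj m (by omega)
        simpa using this
      · simp [hφ]
    have hinj : Set.InjOn φ (WSet G (m + 1) x) := by
      rintro f ⟨hadj, h0, hs⟩ f' ⟨hadj', h0', hs'⟩ heq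
      have h1 := congrArg Prod.fst heq
      have h2 := congrArg Prod.snd heq
      simp only [hφ] at h1 h2
      funext i
      by_cases h : i ≤ m
      · have := congrFun h1 i
        simpa [h] using this
      · by_cases h' : i = m + 1
        · simpa [h'] using h2
        · have hi : m + 1 ≤ i := by omega
          rw [hs i hi, hs' i hi]
          exact h2
    exact Set.Finite.of_finite_image (hfin2.subset himg) hinj

/-- Generic finiteness of path-like sets. -/
private lemma pathSet_finite (hfin : ∀ v, (G.neighborSet v).Finite) {m : ℕ} {A : Set V}
    (hA : A.Finite) {S : Set (ℕ → V)}
    (hS : ∀ f ∈ S, (∀ i, i < m → G.Adj (f i) (f (i + 1))) ∧ f 0 ∈ A ∧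
      ∀ i, m ≤ i → f i = f m) : S.Finite := by
  refine Set.Finite.subset (hA.biUnion fun x _ => wset_finite G hfin m x) ?_
  intro f hf
  obtain ⟨h1, h2, h3⟩ := hS f hf
  exact Set.mem_biUnion h2 ⟨h1, rfl, h3⟩

private lemma nat_card_sigma' {ι : Type*} [Fintype ι] (f : ι → Type*) [∀ i, Finite (f i)] :
    Nat.card (Σ i, f i) = ∑ i, Nat.card (f i) := by
  have : ∀ i, Fintype (f i) := fun i => Fintype.ofFinite _
  simp [Nat.card_eq_fintype_card, Fintype.card_sigma]

private lemma card_split {P Q : (ℕ → V) → Prop} (h : {f : ℕ → V | P f}.Finite) :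
    Nat.card {f : ℕ → V // P f} =
      Nat.card {f : ℕ → V // P f ∧ Q f} + Nat.card {f : ℕ → V // P f ∧ ¬ Q f} := by
  have h1 : {f : ℕ → V | P f ∧ Q f}.Finite := h.subset (fun f hf => hf.1)
  have h2 : {f : ℕ → V | P f ∧ ¬ Q f}.Finite := h.subset (fun f hf => hf.1)
  have hd : Disjoint {f : ℕ → V | P f ∧ Q f} {f : ℕ → V | P f ∧ ¬ Q f} := by
    rw [Set.disjoint_left]; rintro f ⟨-, hq⟩ ⟨-, hq'⟩; exact hq' hq
  have hu : {f : ℕ → V | P f} = {f : ℕ → V | P f ∧ Q f} ∪ {f : ℕ → V | P f ∧ ¬ Q f} := by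
    ext f; by_cases hq : Q f <;> simp [hq]
  calc Nat.card {f : ℕ → V // P f} = Set.ncard {f : ℕ → V | P f} :=
        Nat.card_coe_set_eq _
    _ = Set.ncard ({f : ℕ → V | P f ∧ Q f} ∪ {f : ℕ → V | P f ∧ ¬ Q f}) := by rw [← hu]
    _ = Set.ncard {f : ℕ → V | P f ∧ Q f} + Set.ncard {f : ℕ → V | P f ∧ ¬ Q f} :=
        Set.ncard_union_eq hd h1 h2
    _ = _ := by
        rw [← Nat.card_coe_set_eq {f : ℕ → V | P f ∧ Q f},
          ← Nat.card_coe_set_eq {f : ℕ → V | P f ∧ ¬ Q f}]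
        rfl

private lemma fiber_sum (F : Finset V) {P : (ℕ → V) → Prop} (j : ℕ)
    (hFx : ∀ x : V, {f : ℕ → V | P f ∧ f j = x}.Finite) :
    Nat.card {f : ℕ → V // P f ∧ f j ∈ F} =
      ∑ x ∈ F, Nat.card {f : ℕ → V // P f ∧ f j = x} := by
  have hFx' : ∀ x : V, Finite {f : ℕ → V // P f ∧ f j = x} := fun x =>
    Set.Finite.to_subtype (hFx x)
  have e : {f : ℕ → V // P f ∧ f j ∈ F} ≃
      Σ x : {x // x ∈ F}, {f : ℕ → V // P f ∧ f j = x.1} :=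
    { toFun := fun f => ⟨⟨f.1 j, f.2.2⟩, ⟨f.1, f.2.1, rfl⟩⟩
      invFun := fun q => ⟨q.2.1, q.2.2.1, by rw [q.2.2.2]; exact q.1.2⟩
      left_inv := fun f => rfl
      right_inv := fun q => Sigma.subtype_ext (Subtype.ext q.2.2.2) rfl }
  rw [Nat.card_congr e, nat_card_sigma']
  exact Finset.sum_coe_sort F (fun x => Nat.card {f : ℕ → V // P f ∧ f j = x})

private lemma card_shift (hfree : ∀ (g : Γ) (x : V), g • x = x → g = 1)
    (F : Finset V) (hF : ∀ x : V, ∃! y, y ∈ F ∧ ∃ g : Γ, g • y = x)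
    {P : (ℕ → V) → Prop}
    (hP : ∀ (g : Γ) (f : ℕ → V), P (fun i => g • f i) ↔ P f) :
    Nat.card {f : ℕ → V // P f ∧ f 0 ∈ F} = Nat.card {f : ℕ → V // P f ∧ f 1 ∈ F} := by
  have hex : ∀ x : V, ∃ p : V × Γ, p.1 ∈ F ∧ p.2 • p.1 = x := by
    intro x; obtain ⟨y, ⟨hy, g, hg⟩, -⟩ := hF x; exact ⟨(y, g), hy, hg⟩
  choose p hp1 hp2 using hex
  have key : ∀ x : V, (p x).2⁻¹ • x = (p x).1 := by
    intro x; rw [inv_smul_eq_iff, hp2]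
  have huniq : ∀ (x y : V) (g : Γ), y ∈ F → g • y = x → y = (p x).1 ∧ g = (p x).2 := by
    intro x y g hy hg
    obtain ⟨y₀, -, hu⟩ := hF x
    have h1 : y = y₀ := hu y ⟨hy, g, hg⟩
    have h2 : (p x).1 = y₀ := hu _ ⟨hp1 x, (p x).2, hp2 x⟩
    have hy' : y = (p x).1 := by rw [h1, ← h2]
    refine ⟨hy', ?_⟩
    have hgy : ((p x).2⁻¹ * g) • y = y := by
      rw [mul_smul, hg, key x, ← hy']
    have := hfree _ _ hgy
    rwa [inv_mul_eq_one, eq_comm] at this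
  refine Nat.card_eq_of_bijective
    (fun f => ⟨fun i => (p (f.1 1)).2⁻¹ • f.1 i, (hP _ _).mpr f.2.1, by
      simpa [key (f.1 1)] using hp1 (f.1 1)⟩) ⟨?_, ?_⟩
  · rintro ⟨a, ha, ha0⟩ ⟨b, hb, hb0⟩ hab
    simp only [Subtype.mk.injEq] at hab ⊢
    set ga := (p (a 1)).2 with hga
    set gb := (p (b 1)).2 with hgb
    have hiv : ∀ i, (gb * ga⁻¹) • a i = b i := by
      intro i
      have h : ga⁻¹ • a i = gb⁻¹ • b i := congrFun hab i
      rw [mul_smul, h, smul_inv_smul]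
    obtain ⟨e1, e2⟩ := huniq (b 0) (a 0) (gb * ga⁻¹) ha0 (hiv 0)
    obtain ⟨e3, e4⟩ := huniq (b 0) (b 0) 1 hb0 (one_smul _ _)
    have hone : (gb * ga⁻¹ : Γ) = 1 := by rw [e2, ← e4]
    funext i
    have := hiv i
    rw [hone, one_smul] at this
    exact this
  · rintro ⟨f', hf', hf1⟩
    set g₀ := (p (f' 0)).2 with hg₀
    have hmem : (fun i => g₀⁻¹ • f' i) 0 ∈ F := by
      simpa [hg₀, key (f' 0)] using hp1 (f' 0)
    refine ⟨⟨fun i => g₀⁻¹ • f' i, (hP _ _).mpr hf', hmem⟩, ?_⟩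
    simp only [Subtype.mk.injEq]
    obtain ⟨e1, e2⟩ := huniq (g₀⁻¹ • f' 1) (f' 1) g₀⁻¹ hf1 rfl
    funext i
    show (p ((fun i => g₀⁻¹ • f' i) 1)).2⁻¹ • (g₀⁻¹ • f' i) = f' i
    have h : ((fun i => g₀⁻¹ • f' i) 1) = g₀⁻¹ • f' 1 := rfl
    rw [h, ← e2, inv_inv, smul_inv_smul]

private lemma smul_Q (hauto : ∀ (g : Γ) (x y : V), G.Adj (g • x) (g • y) ↔ G.Adj x y)
    (m : ℕ) (g : Γ) (f : ℕ → V) :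
    (IsProperPath G m (fun i => g • f i) ∧ (fun i => g • f i) m = (fun i => g • f i) 0 ∧
        HasTail m (fun i => g • f i) ∧ ∀ i, m ≤ i → (fun i => g • f i) i = (fun i => g • f i) 0)
      ↔ (IsProperPath G m f ∧ f m = f 0 ∧ HasTail m f ∧ ∀ i, m ≤ i → f i = f 0) := by
  simp [IsProperPath, HasTail, hauto, smul_left_cancel_iff]

private lemma tail_iff (L : ℕ) (hL : 3 ≤ L) (h : ℕ → V) (hpp : IsProperPath G L h) :
    h 1 = h (L - 1) ↔ HasTail L h := by
  constructor
  · intro heq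
    rcases eq_or_lt_of_le hL with h3 | h4
    · exfalso
      have hadj : G.Adj (h 1) (h 2) := hpp.1 1 (by omega)
      have : L - 1 = 2 := by omega
      rw [this] at heq
      exact hadj.ne heq
    · exact ⟨1, le_rfl, by omega, fun j hj1 hj2 => by
        have : j = 1 := by omega
        subst this
        exact heq⟩
  · rintro ⟨k, hk1, hk2, hj⟩
    exact hj 1 le_rfl hk1

private lemma fiber_card (hfin : ∀ v, (G.neighborSet v).Finite) (y a b : V)
    (ha : a ∈ G.neighborSet y) (hb : b ∈ G.neighborSet y) :
    (Nat.card {x' : V // G.Adj y x' ∧ x' ≠ a ∧ x' ≠ b} : ℤ) =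
      ((G.neighborSet y).ncard : ℤ) - 2 + (if a = b then 1 else 0) := by
  have hset : {x' : V | G.Adj y x' ∧ x' ≠ a ∧ x' ≠ b} = G.neighborSet y \ {a, b} := by
    ext x'
    simp only [Set.mem_setOf_eq, Set.mem_diff, Set.mem_insert_iff, Set.mem_singleton_iff,
      SimpleGraph.mem_neighborSet]
    tauto
  have hsub : ({a, b} : Set V) ⊆ G.neighborSet y := by
    intro z hz
    rcases hz with rfl | hz
    · exact ha
    · rw [Set.mem_singleton_iff] at hz; subst hz; exact hb
  have hcard : ({a, b} : Set V).ncard = if a = b then 1 else 2 := by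
    by_cases hab : a = b
    · subst hab; simp [Set.pair_eq_singleton]
    · simp [Set.ncard_pair hab, hab]
  have hle : ({a, b} : Set V).ncard ≤ (G.neighborSet y).ncard :=
    Set.ncard_le_ncard hsub (hfin y)
  have hh : Nat.card {x' : V // G.Adj y x' ∧ x' ≠ a ∧ x' ≠ b} =
      (G.neighborSet y).ncard - ({a, b} : Set V).ncard := by
    rw [← Set.ncard_diff hsub (Set.toFinite _), ← hset, ← Nat.card_coe_set_eq]
    rfl
  rw [hh, Nat.cast_sub hle, hcard]
  by_cases hab : a = b <;> simp [hab] <;> ring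

private lemma strip_card (L : ℕ) (hL : 3 ≤ L) (y : V) :
    Nat.card {f : ℕ → V //
        (IsProperPath G (L + 2) f ∧ f (L + 2) = f 0 ∧ HasTail (L + 2) f ∧
          ∀ i, L + 2 ≤ i → f i = f 0) ∧ f 1 = y} =
    Nat.card {q : (ℕ → V) × V //
        (IsProperPath G L q.1 ∧ q.1 0 = y ∧ q.1 L = y ∧ ∀ i, L ≤ i → q.1 i = y) ∧
        G.Adj y q.2 ∧ q.2 ≠ q.1 1 ∧ q.2 ≠ q.1 (L - 1)} := by
  apply Nat.card_congr
  refine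
    { toFun := fun f => ⟨(fun i => f.1 (min (i + 1) (L + 1)), f.1 0), ?_⟩
      invFun := fun q =>
        ⟨fun i => if i = 0 then q.1.2 else if i ≤ L + 1 then q.1.1 (i - 1) else q.1.2, ?_⟩
      left_inv := ?_
      right_inv := ?_ }
  · obtain ⟨f, ⟨⟨hadj, hnb⟩, hc, ht, hs⟩, h1⟩ := f
    obtain ⟨k, hk1, hk2, hj⟩ := ht
    have htail : f 1 = f (L + 1) := by
      have := hj 1 le_rfl hk1
      have e : L + 2 - 1 = L + 1 := by omega
      rwa [e] at this
    refine ⟨⟨⟨fun i hi => ?_, fun i hi1 hi2 => ?_⟩, ?_, ?_, fun i hi => ?_⟩, ?_, ?_, ?_⟩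
    · show G.Adj (f (min (i + 1) (L + 1))) (f (min (i + 1 + 1) (L + 1)))
      have e1 : min (i + 1) (L + 1) = i + 1 := by omega
      have e2 : min (i + 1 + 1) (L + 1) = i + 2 := by omega
      rw [e1, e2]
      exact hadj (i + 1) (by omega)
    · show f (min (i - 1 + 1) (L + 1)) ≠ f (min (i + 1 + 1) (L + 1))
      have e1 : min (i - 1 + 1) (L + 1) = i := by omega
      have e2 : min (i + 1 + 1) (L + 1) = i + 2 := by omega
      rw [e1, e2]
      have := hnb (i + 1) (by omega) (by omega)
      have e3 : i + 1 - 1 = i := by omega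
      rwa [e3] at this
    · show f (min 1 (L + 1)) = y
      have e : min 1 (L + 1) = 1 := by omega
      rw [e]; exact h1
    · show f (min (L + 1) (L + 1)) = y
      rw [min_self, ← htail]; exact h1
    · show f (min (i + 1) (L + 1)) = y
      have e : min (i + 1) (L + 1) = L + 1 := by omega
      rw [e, ← htail]; exact h1
    · have := hadj 0 (by omega)
      rw [h1] at this
      exact this.symm
    · show f 0 ≠ f (min (1 + 1) (L + 1))
      have e : min (1 + 1) (L + 1) = 2 := by omega
      rw [e]
      have := hnb 1 le_rfl (by omega)
      simpa using this
    · show f 0 ≠ f (min (L - 1 + 1) (L + 1))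
      have e : min (L - 1 + 1) (L + 1) = L := by omega
      rw [e]
      have := hnb (L + 1) (by omega) (by omega)
      have e2 : L + 1 - 1 = L := by omega
      rw [e2, hc] at this
      exact fun h => this h.symm
  · obtain ⟨⟨h, x'⟩, ⟨⟨hadj, hnb⟩, h0, hLy, hs⟩, hxy, hne1, hne2⟩ := q
    dsimp only at hadj hnb h0 hLy hs hxy hne1 hne2
    refine ⟨⟨⟨fun i hi => ?_, fun i hi1 hi2 => ?_⟩, ?_, ?_, fun i hi => ?_⟩, ?_⟩
    · -- adjacency
      rcases Nat.eq_zero_or_pos i with rfl | hipos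
      · show G.Adj (if (0:ℕ) = 0 then x' else _) (if (1:ℕ) = 0 then x' else if 1 ≤ L + 1 then h (1-1) else x')
        simp only [if_pos rfl, if_neg (by omega : ¬ (1:ℕ) = 0), if_pos (by omega : 1 ≤ L + 1)]
        show G.Adj x' (h (1 - 1))
        have e : (1:ℕ) - 1 = 0 := rfl
        rw [e, h0]
        exact hxy.symm
      · by_cases hiL : i ≤ L
        · show G.Adj (if i = 0 then x' else if i ≤ L + 1 then h (i-1) else x')
            (if i + 1 = 0 then x' else if i + 1 ≤ L + 1 then h (i+1-1) else x')
          rw [if_neg (by omega), if_pos (by omega), if_neg (by omega), if_pos (by omega)]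
          have e : i + 1 - 1 = i - 1 + 1 := by omega
          rw [e]
          exact hadj (i - 1) (by omega)
        · -- i = L + 1
          have hiL1 : i = L + 1 := by omega
          subst hiL1
          show G.Adj (if L + 1 = 0 then x' else if L + 1 ≤ L + 1 then h (L+1-1) else x')
            (if L + 1 + 1 = 0 then x' else if L + 1 + 1 ≤ L + 1 then h (L+1+1-1) else x')
          rw [if_neg (by omega), if_pos (by omega), if_neg (by omega), if_neg (by omega)]
          have e : L + 1 - 1 = L := by omega
          rw [e, hLy]
          exact hxy
    · -- no backtracking
      show (if i - 1 = 0 then x' else if i - 1 ≤ L + 1 then h (i-1-1) else x') ≠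
        (if i + 1 = 0 then x' else if i + 1 ≤ L + 1 then h (i+1-1) else x')
      rcases eq_or_lt_of_le hi1 with h1 | hgt
      · -- i = 1
        rw [if_pos (by omega), if_neg (by omega), if_pos (by omega)]
        have e : 1 + 1 - 1 = 1 := rfl
        have e2 : i + 1 - 1 = 1 := by omega
        rw [e2]
        exact hne1
      · by_cases hiL : i ≤ L
        · rw [if_neg (by omega), if_pos (by omega), if_neg (by omega), if_pos (by omega)]
          have := hnb (i - 1) (by omega) (by omega)
          have e1 : i - 1 - 1 = i - 1 - 1 := rfl
          have e2 : i - 1 + 1 = i + 1 - 1 := by omega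
          rwa [e2] at this
        · -- i = L + 1
          have hiL1 : i = L + 1 := by omega
          subst hiL1
          rw [if_neg (by omega), if_pos (by omega), if_neg (by omega), if_neg (by omega)]
          have e : L + 1 - 1 - 1 = L - 1 := by omega
          rw [e]
          exact fun hcon => hne2 hcon.symm
    · -- closed
      show (if L + 2 = 0 then x' else if L + 2 ≤ L + 1 then h (L+2-1) else x') =
        (if (0:ℕ) = 0 then x' else _)
      rw [if_neg (by omega), if_neg (by omega), if_pos rfl]
    · -- has tail
      refine ⟨1, le_rfl, by omega, fun j hj1 hj2 => ?_⟩
      have hj : j = 1 := by omega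
      subst hj
      show (if (1:ℕ) = 0 then x' else if 1 ≤ L + 1 then h (1-1) else x') =
        (if L + 2 - 1 = 0 then x' else if L + 2 - 1 ≤ L + 1 then h (L+2-1-1) else x')
      rw [if_neg (by omega), if_pos (by omega), if_neg (by omega), if_pos (by omega)]
      have e1 : (1:ℕ) - 1 = 0 := rfl
      have e2 : L + 2 - 1 - 1 = L := by omega
      rw [e1, e2, h0, hLy]
    · -- stabilized
      show (if i = 0 then x' else if i ≤ L + 1 then h (i-1) else x') =
        (if (0:ℕ) = 0 then x' else _)
      rw [if_neg (by omega), if_neg (by omega), if_pos rfl]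
    · -- f 1 = y
      show (if (1:ℕ) = 0 then x' else if 1 ≤ L + 1 then h (1-1) else x') = y
      rw [if_neg (by omega), if_pos (by omega)]
      have e : (1:ℕ) - 1 = 0 := rfl
      rw [e, h0]
  · -- left inverse
    rintro ⟨f, ⟨hpp, hc, ht, hs⟩, h1⟩
    apply Subtype.ext
    funext i
    show (if i = 0 then f 0 else if i ≤ L + 1 then f (min (i - 1 + 1) (L + 1)) else f 0) = f i
    rcases Nat.eq_zero_or_pos i with rfl | hipos
    · rw [if_pos rfl]
    · by_cases hiL : i ≤ L + 1
      · rw [if_neg (by omega), if_pos hiL]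
        have e : min (i - 1 + 1) (L + 1) = i := by omega
        rw [e]
      · rw [if_neg (by omega), if_neg hiL]
        by_cases him : L + 2 ≤ i
        · rw [hs i him]
        · have : i = L + 2 := by omega
          rw [this, hc]
  · -- right inverse
    rintro ⟨⟨h, x'⟩, ⟨hpp, h0, hLy, hsb⟩, hrest⟩
    dsimp only at h0 hLy hsb
    apply Subtype.ext
    apply Prod.ext
    · funext i
      show (if min (i+1) (L+1) = 0 then x' else
          if min (i+1) (L+1) ≤ L + 1 then h (min (i+1) (L+1) - 1) else x') = h i
      rw [if_neg (by omega), if_pos (by omega)]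
      by_cases hiL : i ≤ L
      · have e : min (i + 1) (L + 1) - 1 = i := by omega
        rw [e]
      · have e : min (i + 1) (L + 1) - 1 = L := by omega
        rw [e, hLy, hsb i (by omega)]
    · show (if (0:ℕ) = 0 then x' else if (0:ℕ) ≤ L + 1 then h (0 - 1) else x') = x'
      rw [if_pos rfl]


private lemma county (hfin : ∀ v, (G.neighborSet v).Finite) (L : ℕ) (hL : 3 ≤ L) (y : V) :
    (Nat.card {q : (ℕ → V) × V //
        (IsProperPath G L q.1 ∧ q.1 0 = y ∧ q.1 L = y ∧ ∀ i, L ≤ i → q.1 i = y) ∧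
        G.Adj y q.2 ∧ q.2 ≠ q.1 1 ∧ q.2 ≠ q.1 (L - 1)} : ℤ) =
      (((G.neighborSet y).ncard : ℤ) - 2) * pathCount G L y y +
        Nat.card {h : ℕ → V //
          (IsProperPath G L h ∧ h 0 = y ∧ h L = y ∧ ∀ i, L ≤ i → h i = y) ∧
          HasTail L h} := by
  set Cy : (ℕ → V) → Prop :=
    fun h => IsProperPath G L h ∧ h 0 = y ∧ h L = y ∧ ∀ i, L ≤ i → h i = y with hCy
  have hHfin : {h : ℕ → V | Cy h}.Finite := by
    refine pathSet_finite G hfin (m := L) (Set.finite_singleton y) (fun f hf => ?_)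
    exact ⟨hf.1.1, by rw [hf.2.1]; exact rfl, fun i hi => by rw [hf.2.2.2 i hi, hf.2.2.1]⟩
  haveI : Finite {h : ℕ → V // Cy h} := hHfin.to_subtype
  haveI : Fintype {h : ℕ → V // Cy h} := Fintype.ofFinite _
  haveI hfib : ∀ (h : {h : ℕ → V // Cy h}),
      Finite {x' : V // G.Adj y x' ∧ x' ≠ h.1 1 ∧ x' ≠ h.1 (L - 1)} := fun h =>
    Set.Finite.to_subtype ((hfin y).subset (fun x' hx' => hx'.1))
  have e : {q : (ℕ → V) × V // Cy q.1 ∧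
      G.Adj y q.2 ∧ q.2 ≠ q.1 1 ∧ q.2 ≠ q.1 (L - 1)} ≃
      Σ h : {h : ℕ → V // Cy h}, {x' : V // G.Adj y x' ∧ x' ≠ h.1 1 ∧ x' ≠ h.1 (L - 1)} :=
    { toFun := fun q => ⟨⟨q.1.1, q.2.1⟩, ⟨q.1.2, q.2.2⟩⟩
      invFun := fun s => ⟨(s.1.1, s.2.1), s.1.2, s.2.2⟩
      left_inv := fun q => rfl
      right_inv := fun s => rfl }
  have step1 : (Nat.card {q : (ℕ → V) × V // Cy q.1 ∧
      G.Adj y q.2 ∧ q.2 ≠ q.1 1 ∧ q.2 ≠ q.1 (L - 1)} : ℤ) =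
      ∑ h : {h : ℕ → V // Cy h},
        (Nat.card {x' : V // G.Adj y x' ∧ x' ≠ h.1 1 ∧ x' ≠ h.1 (L - 1)} : ℤ) := by
    rw [Nat.card_congr e, nat_card_sigma']
    push_cast
    rfl
  have step2 : ∀ h : {h : ℕ → V // Cy h},
      (Nat.card {x' : V // G.Adj y x' ∧ x' ≠ h.1 1 ∧ x' ≠ h.1 (L - 1)} : ℤ) =
      ((G.neighborSet y).ncard : ℤ) - 2 + (if h.1 1 = h.1 (L - 1) then 1 else 0) := by
    intro h
    have ha : h.1 1 ∈ G.neighborSet y := by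
      have := h.2.1.1 0 (by omega)
      rwa [h.2.2.1] at this
    have hb : h.1 (L - 1) ∈ G.neighborSet y := by
      have := h.2.1.1 (L - 1) (by omega)
      have e1 : L - 1 + 1 = L := by omega
      rw [e1, h.2.2.2.1] at this
      exact this.symm
    exact fiber_card G hfin y _ _ ha hb
  have step3 : (∑ h : {h : ℕ → V // Cy h},
      (((G.neighborSet y).ncard : ℤ) - 2 + (if h.1 1 = h.1 (L - 1) then 1 else 0))) =
      (((G.neighborSet y).ncard : ℤ) - 2) * pathCount G L y y +
        Nat.card {h : ℕ → V // Cy h ∧ HasTail L h} := by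
    rw [Finset.sum_add_distrib, Finset.sum_const, Finset.card_univ]
    congr 1
    · rw [nsmul_eq_mul, mul_comm]
      congr 1
      rw [pathCount, ← Nat.card_eq_fintype_card]
    · rw [Finset.sum_boole]
      norm_cast
      rw [← Fintype.card_subtype]
      rw [← Nat.card_eq_fintype_card]
      rw [Nat.card_congr (Equiv.subtypeSubtypeEquivSubtypeInter Cy
        (fun h => h 1 = h (L - 1)))]
      apply Nat.card_congr
      apply Equiv.subtypeEquivRight
      intro h
      exact and_congr_right fun hc => tail_iff G L hL h hc.1
  rw [step1, Finset.sum_congr rfl (fun h _ => step2 h), step3]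

private lemma pathCount_zero (x : V) : pathCount G 0 x x = 1 := by
  haveI : Unique {f : ℕ → V //
      IsProperPath G 0 f ∧ f 0 = x ∧ f 0 = x ∧ ∀ i, 0 ≤ i → f i = x} :=
    { default := ⟨fun _ => x,
        ⟨fun i hi => absurd hi (by omega), fun i h1 h2 => absurd h2 (by omega)⟩,
        rfl, rfl, fun i _ => rfl⟩
      uniq := fun f => Subtype.ext (funext fun i => f.2.2.2.2 i (Nat.zero_le i)) }
  exact Nat.card_unique

private lemma pathCount_one (x : V) : pathCount G 1 x x = 0 := by
  haveI : IsEmpty {f : ℕ → V //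
      IsProperPath G 1 f ∧ f 0 = x ∧ f 1 = x ∧ ∀ i, 1 ≤ i → f i = x} := by
    refine ⟨fun f => ?_⟩
    obtain ⟨f, hpp, h0, h1, -⟩ := f
    have := hpp.1 0 (by omega)
    rw [h0, h1] at this
    exact this.ne rfl
  exact Nat.card_of_isEmpty

private lemma pathCount_two (x : V) : pathCount G 2 x x = 0 := by
  haveI : IsEmpty {f : ℕ → V //
      IsProperPath G 2 f ∧ f 0 = x ∧ f 2 = x ∧ ∀ i, 2 ≤ i → f i = x} := by
    refine ⟨fun f => ?_⟩
    obtain ⟨f, hpp, h0, h2, -⟩ := f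
    have := hpp.2 1 le_rfl le_rfl
    rw [show (1:ℕ) - 1 = 0 from rfl, h0, show (1:ℕ) + 1 = 2 from rfl, h2] at this
    exact this rfl
  exact Nat.card_of_isEmpty

private lemma tailCount_small (F : Finset V) (m : ℕ) (hm : m ≤ 4) :
    tailCount G F m = 0 := by
  rw [tailCount]
  apply Finset.sum_eq_zero
  intro x _
  haveI : IsEmpty {f : ℕ → V //
      IsProperPath G m f ∧ f 0 = x ∧ f m = x ∧ HasTail m f ∧ ∀ i, m ≤ i → f i = x} := by
    refine ⟨fun f => ?_⟩
    obtain ⟨f, hpp, h0, hmx, ⟨k, hk1, hk2, hj⟩, -⟩ := f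
    by_cases hm3 : m ≤ 3
    · omega
    · have hm4 : m = 4 := by omega
      subst hm4
      have hk : k = 1 := by omega
      subst hk
      have heq := hj 1 le_rfl le_rfl
      have := hpp.2 2 (by omega) (by omega)
      rw [show (2:ℕ) - 1 = 1 from rfl, show (2:ℕ) + 1 = 3 from rfl] at this
      exact this heq
  exact Nat.card_of_isEmpty

private def QT (m : ℕ) (f : ℕ → V) : Prop :=
  IsProperPath G m f ∧ f m = f 0 ∧ HasTail m f ∧ ∀ i, m ≤ i → f i = f 0

private def QN (m : ℕ) (f : ℕ → V) : Prop :=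
  IsProperPath G m f ∧ f m = f 0 ∧ ¬ HasTail m f ∧ ∀ i, m ≤ i → f i = f 0

private lemma tail_rec (hfin : ∀ v, (G.neighborSet v).Finite)
    (hauto : ∀ (g : Γ) (x y : V), G.Adj (g • x) (g • y) ↔ G.Adj x y)
    (hfree : ∀ (g : Γ) (x : V), g • x = x → g = 1)
    (F : Finset V) (hF : ∀ x : V, ∃! y, y ∈ F ∧ ∃ g : Γ, g • y = x)
    (L : ℕ) (hL : 3 ≤ L) :
    (tailCount G F (L + 2) : ℤ) =
      (∑ y ∈ F, (((G.neighborSet y).ncard : ℤ) - 2) * pathCount G L y y) +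
        tailCount G F L := by
  have hfinx : ∀ x : V, {f : ℕ → V | QT G (L + 2) f ∧ f 0 = x}.Finite := by
    intro x
    refine pathSet_finite G hfin (m := L + 2) (Set.finite_singleton x) (fun f hf => ?_)
    obtain ⟨⟨⟨hadj, hnb⟩, hcl, ht, hst⟩, h0⟩ := hf
    exact ⟨hadj, by rw [h0]; exact rfl, fun i hi => by rw [hst i hi, hcl]⟩
  have ha : tailCount G F (L + 2) = Nat.card {f : ℕ → V // QT G (L + 2) f ∧ f 0 ∈ F} := by
    rw [fiber_sum F 0 hfinx, tailCount]
    refine Finset.sum_congr rfl (fun x hx => ?_)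
    apply Nat.card_congr
    apply Equiv.subtypeEquivRight
    intro f
    constructor
    · rintro ⟨h1, h2, h3, h4, h5⟩
      exact ⟨⟨h1, by rw [h3, h2], h4, fun i hi => by rw [h5 i hi, h2]⟩, h2⟩
    · rintro ⟨⟨h1, hc, h4, h5⟩, h2⟩
      exact ⟨h1, h2, by rw [hc, h2], h4, fun i hi => by rw [h5 i hi, h2]⟩
  have hb : Nat.card {f : ℕ → V // QT G (L + 2) f ∧ f 0 ∈ F} =
      Nat.card {f : ℕ → V // QT G (L + 2) f ∧ f 1 ∈ F} :=
    card_shift hfree F hF (fun g f => smul_Q G hauto (L + 2) g f)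
  have hfiny : ∀ y : V, {f : ℕ → V | QT G (L + 2) f ∧ f 1 = y}.Finite := by
    intro y
    refine pathSet_finite G hfin (m := L + 2) (hfin y) (fun f hf => ?_)
    obtain ⟨⟨⟨hadj, hnb⟩, hcl, ht, hst⟩, h1⟩ := hf
    have h0 : G.Adj (f 0) (f 1) := hadj 0 (by norm_num)
    rw [h1] at h0
    exact ⟨hadj, h0.symm, fun i hi => by rw [hst i hi, hcl]⟩
  have hc : Nat.card {f : ℕ → V // QT G (L + 2) f ∧ f 1 ∈ F} =
      ∑ y ∈ F, Nat.card {f : ℕ → V // QT G (L + 2) f ∧ f 1 = y} := fiber_sum F 1 hfiny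
  have hd : ∀ y ∈ F, (Nat.card {f : ℕ → V // QT G (L + 2) f ∧ f 1 = y} : ℤ) =
      (((G.neighborSet y).ncard : ℤ) - 2) * pathCount G L y y +
        Nat.card {h : ℕ → V //
          (IsProperPath G L h ∧ h 0 = y ∧ h L = y ∧ ∀ i, L ≤ i → h i = y) ∧
          HasTail L h} := by
    intro y _
    rw [show Nat.card {f : ℕ → V // QT G (L + 2) f ∧ f 1 = y} =
        Nat.card {f : ℕ → V //
          (IsProperPath G (L + 2) f ∧ f (L + 2) = f 0 ∧ HasTail (L + 2) f ∧
            ∀ i, L + 2 ≤ i → f i = f 0) ∧ f 1 = y} from rfl]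
    rw [strip_card G L hL y]
    exact county G hfin L hL y
  have he : (tailCount G F L : ℤ) = ∑ y ∈ F, (Nat.card {h : ℕ → V //
      (IsProperPath G L h ∧ h 0 = y ∧ h L = y ∧ ∀ i, L ≤ i → h i = y) ∧
      HasTail L h} : ℤ) := by
    rw [tailCount]
    push_cast
    refine Finset.sum_congr rfl (fun y hy => ?_)
    congr 1
    apply Nat.card_congr
    apply Equiv.subtypeEquivRight
    intro f
    constructor
    · rintro ⟨h1, h2, h3, h4, h5⟩
      exact ⟨⟨h1, h2, h3, h5⟩, h4⟩
    · rintro ⟨⟨h1, h2, h3, h5⟩, h4⟩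
      exact ⟨h1, h2, h3, h4, h5⟩
  rw [ha, hb, hc]
  push_cast
  rw [Finset.sum_congr rfl hd, Finset.sum_add_distrib, he]

private lemma tail_total (hfin : ∀ v, (G.neighborSet v).Finite)
    (hauto : ∀ (g : Γ) (x y : V), G.Adj (g • x) (g • y) ↔ G.Adj x y)
    (hfree : ∀ (g : Γ) (x : V), g • x = x → g = 1)
    (F : Finset V) (hF : ∀ x : V, ∃! y, y ∈ F ∧ ∃ g : Γ, g • y = x)
    (m : ℕ) :
    (tailCount G F m : ℤ) = ∑ x ∈ F, (((G.neighborSet x).ncard : ℤ) - 2) *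
      ∑ k ∈ Finset.Icc 1 ((m - 1) / 2), (pathCount G (m - 2 * k) x x : ℤ) := by
  induction m using Nat.strong_induction_on with
  | _ m ih =>
    by_cases hm4 : m ≤ 4
    · rw [tailCount_small G F m hm4]
      have hz : ∀ x ∈ F,
          (∑ k ∈ Finset.Icc 1 ((m - 1) / 2), (pathCount G (m - 2 * k) x x : ℤ)) = 0 := by
        intro x _
        interval_cases m
        · simp
        · simp
        · simp
        · rw [show (3 - 1) / 2 = 1 from rfl, Finset.Icc_self, Finset.sum_singleton]
          rw [show 3 - 2 * 1 = 1 from rfl, pathCount_one]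
          simp
        · rw [show (4 - 1) / 2 = 1 from rfl, Finset.Icc_self, Finset.sum_singleton]
          rw [show 4 - 2 * 1 = 2 from rfl, pathCount_two]
          simp
      rw [Finset.sum_congr rfl (fun x hx => by rw [hz x hx, mul_zero])]
      simp
    · have hm5 : 5 ≤ m := by omega
      obtain ⟨L, rfl⟩ : ∃ L, m = L + 2 := ⟨m - 2, by omega⟩
      have hL : 3 ≤ L := by omega
      rw [tail_rec G hfin hauto hfree F hF L hL, ih L (by omega), ← Finset.sum_add_distrib]
      refine Finset.sum_congr rfl (fun x hx => ?_)
      rw [← mul_add]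
      congr 1
      have hK : (L + 2 - 1) / 2 = (L - 1) / 2 + 1 := by omega
      rw [hK]
      have h1mem : 1 ∈ Finset.Icc 1 ((L - 1) / 2 + 1) := Finset.mem_Icc.mpr ⟨le_rfl, by omega⟩
      rw [← Finset.sum_erase_add _ _ h1mem, Finset.Icc_erase_left, ← Finset.Icc_add_one_left_eq_Ioc]
      rw [show L + 2 - 2 * 1 = L from by omega]
      rw [add_comm]
      congr 1
      have hmap : Finset.Icc (1 + 1) ((L - 1) / 2 + 1) =
          (Finset.Icc 1 ((L - 1) / 2)).map (addRightEmbedding 1) := by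
        rw [Finset.map_add_right_Icc]
      rw [hmap, Finset.sum_map]
      refine Finset.sum_congr rfl (fun k hk => ?_)
      simp only [addRightEmbedding_apply]
      have hidx : L + 2 - 2 * (k + 1) = L - 2 * k := by omega
      rw [hidx]

private lemma icc_split (m : ℕ) (hm : 1 ≤ m) (x : V) :
    (∑ k ∈ Finset.Icc 1 (m / 2), (pathCount G (m - 2 * k) x x : ℤ)) =
      (∑ k ∈ Finset.Icc 1 ((m - 1) / 2), (pathCount G (m - 2 * k) x x : ℤ)) +
        (if Even m then 1 else 0) := by
  by_cases he : Even m
  · have hm2 : 2 ≤ m := by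
      obtain ⟨t, rfl⟩ := he; omega
    have hK : m / 2 = (m - 1) / 2 + 1 := by
      obtain ⟨t, rfl⟩ := he; omega
    rw [hK, Finset.sum_Icc_succ_top (by omega : 1 ≤ (m - 1) / 2 + 1)]
    have hz : m - 2 * ((m - 1) / 2 + 1) = 0 := by
      obtain ⟨t, rfl⟩ := he; omega
    rw [hz, pathCount_zero, if_pos he]
    norm_num
  · have hK : m / 2 = (m - 1) / 2 := by
      have := Nat.odd_iff.mp (Nat.not_even_iff_odd.mp he)
      omega
    rw [hK, if_neg he, add_zero]

end Stmt13Aux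

/-- For a periodic simple graph with free `Γ`-action and finite quotient,
with `B_m = A_m - (Q-I) ∑_{k=1}^{⌊m/2⌋} A_{m-2k}`, one has
`Tr_Γ(B_m) = N_m - Tr_Γ(Q - I)` for `m` even, and `Tr_Γ(B_m) = N_m` for `m` odd,
where `N_m` is the number of reduced closed paths of length `m` starting in `F`. -/
theorem stmt13 {V : Type*} {Γ : Type*} [Group Γ] [MulAction Γ V]
    (G : SimpleGraph V) (d : ℕ)
    (hfin : ∀ v, (G.neighborSet v).Finite) (hdeg : ∀ v, (G.neighborSet v).ncard ≤ d)
    (hauto : ∀ (g : Γ) (x y : V), G.Adj (g • x) (g • y) ↔ G.Adj x y)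
    (hfree : ∀ (g : Γ) (x : V), g • x = x → g = 1)
    (F : Finset V) (hF : ∀ x : V, ∃! y, y ∈ F ∧ ∃ g : Γ, g • y = x)
    (m : ℕ) (hm : 1 ≤ m) :
    (∑ x ∈ F, ((pathCount G m x x : ℤ) -
        (((G.neighborSet x).ncard : ℤ) - 2) *
          ∑ k ∈ Finset.Icc 1 (m / 2), (pathCount G (m - 2 * k) x x : ℤ))) =
      (Nat.card {f : ℕ → V // IsProperPath G m f ∧ f m = f 0 ∧ ¬ HasTail m f ∧
          f 0 ∈ F ∧ ∀ i, m ≤ i → f i = f 0} : ℤ) -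
        (if Even m then ∑ x ∈ F, (((G.neighborSet x).ncard : ℤ) - 2) else 0) := by
  classical
  have hCfin : ∀ x : V, {f : ℕ → V | IsProperPath G m f ∧ f 0 = x ∧ f m = x ∧
      ∀ i, m ≤ i → f i = x}.Finite := by
    intro x
    refine pathSet_finite G hfin (m := m) (Set.finite_singleton x) (fun f hf => ?_)
    obtain ⟨⟨hadj, hnb⟩, h0, hmx, hst⟩ := hf
    exact ⟨hadj, by rw [h0]; exact rfl, fun i hi => by rw [hst i hi, hmx]⟩
  have hsplit : ∀ x : V, pathCount G m x x =
      Nat.card {f : ℕ → V // (IsProperPath G m f ∧ f 0 = x ∧ f m = x ∧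
        ∀ i, m ≤ i → f i = x) ∧ HasTail m f} +
      Nat.card {f : ℕ → V // (IsProperPath G m f ∧ f 0 = x ∧ f m = x ∧
        ∀ i, m ≤ i → f i = x) ∧ ¬ HasTail m f} := by
    intro x
    simp only [pathCount]
    exact card_split (hCfin x)
  have hT : ∑ x ∈ F, Nat.card {f : ℕ → V // (IsProperPath G m f ∧ f 0 = x ∧ f m = x ∧
      ∀ i, m ≤ i → f i = x) ∧ HasTail m f} = tailCount G F m := by
    rw [tailCount]
    refine Finset.sum_congr rfl (fun x hx => ?_)
    apply Nat.card_congr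
    apply Equiv.subtypeEquivRight
    intro f
    constructor
    · rintro ⟨⟨h1, h2, h3, h4⟩, h5⟩
      exact ⟨h1, h2, h3, h5, h4⟩
    · rintro ⟨h1, h2, h3, h5, h4⟩
      exact ⟨⟨h1, h2, h3, h4⟩, h5⟩
  have hNfinx : ∀ x : V, {f : ℕ → V | QN G m f ∧ f 0 = x}.Finite := by
    intro x
    refine pathSet_finite G hfin (m := m) (Set.finite_singleton x) (fun f hf => ?_)
    obtain ⟨⟨⟨hadj, hnb⟩, hcl, hnt, hst⟩, h0⟩ := hf
    exact ⟨hadj, by rw [h0]; exact rfl, fun i hi => by rw [hst i hi, hcl]⟩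
  have hbig : Nat.card {f : ℕ → V // IsProperPath G m f ∧ f m = f 0 ∧ ¬ HasTail m f ∧
      f 0 ∈ F ∧ ∀ i, m ≤ i → f i = f 0} =
      ∑ x ∈ F, Nat.card {f : ℕ → V // (IsProperPath G m f ∧ f 0 = x ∧ f m = x ∧
        ∀ i, m ≤ i → f i = x) ∧ ¬ HasTail m f} := by
    have e1 : Nat.card {f : ℕ → V // IsProperPath G m f ∧ f m = f 0 ∧ ¬ HasTail m f ∧
        f 0 ∈ F ∧ ∀ i, m ≤ i → f i = f 0} =
        Nat.card {f : ℕ → V // QN G m f ∧ f 0 ∈ F} := by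
      apply Nat.card_congr
      apply Equiv.subtypeEquivRight
      intro f
      constructor
      · rintro ⟨h1, h2, h3, h4, h5⟩
        exact ⟨⟨h1, h2, h3, h5⟩, h4⟩
      · rintro ⟨⟨h1, h2, h3, h5⟩, h4⟩
        exact ⟨h1, h2, h3, h4, h5⟩
    rw [e1, fiber_sum F 0 hNfinx]
    refine Finset.sum_congr rfl (fun x hx => ?_)
    apply Nat.card_congr
    apply Equiv.subtypeEquivRight
    intro f
    constructor
    · rintro ⟨⟨h1, hc, hnt, h5⟩, h0⟩
      exact ⟨⟨h1, h0, by rw [hc, h0], fun i hi => by rw [h5 i hi, h0]⟩, hnt⟩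
    · rintro ⟨⟨h1, h0, hmx, h5⟩, hnt⟩
      exact ⟨⟨h1, by rw [hmx, h0], hnt, fun i hi => by rw [h5 i hi, h0]⟩, h0⟩
  have key1 : (∑ x ∈ F, (pathCount G m x x : ℤ)) =
      (Nat.card {f : ℕ → V // IsProperPath G m f ∧ f m = f 0 ∧ ¬ HasTail m f ∧
        f 0 ∈ F ∧ ∀ i, m ≤ i → f i = f 0} : ℤ) + (tailCount G F m : ℤ) := by
    rw [hbig, ← hT]
    push_cast
    rw [← Finset.sum_add_distrib]
    refine Finset.sum_congr rfl (fun x hx => ?_)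
    rw [hsplit x]
    push_cast
    ring
  have hsum : ∀ x : V, (∑ k ∈ Finset.Icc 1 (m / 2), (pathCount G (m - 2 * k) x x : ℤ)) =
      (∑ k ∈ Finset.Icc 1 ((m - 1) / 2), (pathCount G (m - 2 * k) x x : ℤ)) +
        (if Even m then 1 else 0) := fun x => icc_split G m hm x
  have h2 : (∑ x ∈ F, (((G.neighborSet x).ncard : ℤ) - 2) *
      ∑ k ∈ Finset.Icc 1 (m / 2), (pathCount G (m - 2 * k) x x : ℤ)) =
      (∑ x ∈ F, (((G.neighborSet x).ncard : ℤ) - 2) *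
        ∑ k ∈ Finset.Icc 1 ((m - 1) / 2), (pathCount G (m - 2 * k) x x : ℤ)) +
      (if Even m then ∑ x ∈ F, (((G.neighborSet x).ncard : ℤ) - 2) else 0) := by
    have step : ∀ x ∈ F, (((G.neighborSet x).ncard : ℤ) - 2) *
        ∑ k ∈ Finset.Icc 1 (m / 2), (pathCount G (m - 2 * k) x x : ℤ) =
        (((G.neighborSet x).ncard : ℤ) - 2) *
          (∑ k ∈ Finset.Icc 1 ((m - 1) / 2), (pathCount G (m - 2 * k) x x : ℤ)) +
        (((G.neighborSet x).ncard : ℤ) - 2) * (if Even m then 1 else 0) := by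
      intro x _
      rw [hsum x, mul_add]
    rw [Finset.sum_congr rfl step, Finset.sum_add_distrib]
    congr 1
    by_cases he : Even m
    · simp [he]
    · simp [he]
  rw [Finset.sum_sub_distrib, h2, key1,
    tail_total G hfin hauto hfree F hF m]
  ring
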